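/- Let α ≥ 1 and R > 0 be reals, K ≥ 1 a natural number, and a, b, c nonnegative reals. Then (min((a+1)/K, 1)^{1/α} + min((b+1)/K, R)^{1/α} + min((c+1)/K, 1)^{1/α})^α ≤ (3^{α−1}/K)·(a + b + c + 3). -/

import Mathlib

/-! The power-mean inequality `(x + y + z)^α ≤ 3^(α-1) (x^α + y^α + z^α)`, applied to the
`α`-th roots of the three `min`s, leaves `3^(α-1)` times their sum, and each `min` is at most
its first argument `(x + 1)/K`. -/

open Finset

theorem Real.sum_rpow_one_div_rpow_le {ι : Type*} (s : Finset ι) {f : ι → ℝ} {p : ℝ}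
    (hp : 1 ≤ p) (hf : ∀ i ∈ s, 0 ≤ f i) :
    (∑ i ∈ s, f i ^ (1 / p)) ^ p ≤ (#s : ℝ) ^ (p - 1) * ∑ i ∈ s, f i := by
  have hp0 : p ≠ 0 := by positivity
  calc (∑ i ∈ s, f i ^ (1 / p)) ^ p
      ≤ (#s : ℝ) ^ (p - 1) * ∑ i ∈ s, (f i ^ (1 / p)) ^ p :=
        Real.rpow_sum_le_const_mul_sum_rpow_of_nonneg s hp
          fun i hi => Real.rpow_nonneg (hf i hi) _
    _ = (#s : ℝ) ^ (p - 1) * ∑ i ∈ s, f i := by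
        congr 1
        refine sum_congr rfl fun i hi => ?_
        rw [one_div, Real.rpow_inv_rpow (hf i hi) hp0]

/-- Per-server power bound in the multi-server proof: for `α ≥ 1`, `R > 0`, `K ≥ 1`,
and nonnegative `a, b, c`,
`(min((a+1)/K, 1)^(1/α) + min((b+1)/K, R)^(1/α) + min((c+1)/K, 1)^(1/α))^α
  ≤ (3^(α-1)/K)·(a+b+c+3)`. -/
theorem stmt_11 (α R : ℝ) (hα : 1 ≤ α) (hR : 0 < R) (K : ℕ) (hK : 1 ≤ K)
    (a b c : ℝ) (ha : 0 ≤ a) (hb : 0 ≤ b) (hc : 0 ≤ c) :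
    ((min ((a + 1) / (K : ℝ)) 1) ^ (1 / α) + (min ((b + 1) / (K : ℝ)) R) ^ (1 / α)
        + (min ((c + 1) / (K : ℝ)) 1) ^ (1 / α)) ^ α
      ≤ ((3 : ℝ) ^ (α - 1) / (K : ℝ)) * (a + b + c + 3) := by
  have hK0 : (0 : ℝ) < K := by exact_mod_cast hK
  set m : Fin 3 → ℝ := ![min ((a + 1) / K) 1, min ((b + 1) / K) R, min ((c + 1) / K) 1]
  have hm : ∀ i ∈ univ, 0 ≤ m i := by
    intro i _
    fin_cases i
    exacts [le_min (by positivity) zero_le_one, le_min (by positivity) hR.le,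
      le_min (by positivity) zero_le_one]
  have hsum : ∑ i, m i ≤ (a + b + c + 3) / K := by
    have hsplit : (a + b + c + 3) / K = (a + 1) / K + (b + 1) / K + (c + 1) / K := by ring
    simp only [m, Fin.sum_univ_three, Matrix.cons_val_zero, Matrix.cons_val_one,
      Matrix.cons_val_two, Matrix.head_cons, Matrix.tail_cons, hsplit]
    gcongr <;> exact min_le_left _ _
  calc _ = (∑ i, m i ^ (1 / α)) ^ α := by simp [m, Fin.sum_univ_three]
    _ ≤ 3 ^ (α - 1) * ∑ i, m i := by
        simpa using Real.sum_rpow_one_div_rpow_le univ hα hm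
    _ ≤ 3 ^ (α - 1) * ((a + b + c + 3) / K) := by gcongr
    _ = _ := by ring
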